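/- Let X be a compact Hausdorff space with more than one point, equipped with a continuous action of a group G having the weak specification property. Then there exist an entourage U of X and a nonempty finite subset Λ ⊂ G with Λ = Λ⁻¹ such that for every nonempty finite subset F ⊂ G there is an (F,U)-separated subset Z ⊂ X with |Z| ≥ 2^(|F|/|Λ|); in particular sep(X,G,F,U) ≥ 2^(|F|/|Λ|) for every nonempty finite F ⊂ G. -/

import Mathlib

/-!
Pick distinct points `a`, `b` and a symmetric entourage `V` with `V ○ V ○ V` missing `(a, b)`,
so that no `V`-close pair can have its members `V`-close to `a` and to `b` respectively.
Enlarge a specification set for `V` to a symmetric `Λ ∋ 1`. A maximal subset `S ⊆ F` with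
`s t⁻¹ ∉ Λ` for distinct `s, t ∈ S` satisfies `F ⊆ Λ S`, so `|S| ≥ |F| / |Λ|`. The singletons
`{s}`, `s ∈ S`, are then `Λ`-apart, so specification produces for every `T ⊆ S` a point whose
`s`-translate is `V`-close to `a` for `s ∈ T` and to `b` for `s ∉ T`; these `2 ^ |S|` points
are `(F, V)`-separated.
-/

open scoped Pointwise Uniformity

/-- `dynEnt U F = U^(F) = {(x,y) : (g•x, g•y) ∈ U for all g ∈ F}`. -/
def dynEnt {G X : Type*} [SMul G X] (U : Set (X × X)) (F : Set G) : Set (X × X) :=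
  {p | ∀ g ∈ F, (g • p.1, g • p.2) ∈ U}

/-- `sepCard U F = sep(X,G,F,U)`: the maximal cardinality of an `(F,U)`-separated subset. -/
noncomputable def sepCard {G X : Type*} [SMul G X] (U : Set (X × X)) (F : Set G) : ℕ :=
  sSup {n : ℕ | ∃ Z : Finset X, Z.card = n ∧
    ∀ x ∈ Z, ∀ y ∈ Z, x ≠ y → (x, y) ∉ dynEnt U F}

/-- `Λ` is a specification subset for the entourage `U`. -/
def IsSpecificationSubset (G X : Type*) [Group G] [SMul G X]
    (U : Set (X × X)) (Λ : Finset G) : Prop :=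
  ∀ (ι : Type) (_ : Finite ι) (_ : Nonempty ι) (Ω : ι → Finset G) (x : ι → X),
    (∀ j k : ι, j ≠ k → Disjoint ((Ω j : Set G)) ((Λ : Set G) * (Ω k : Set G))) →
    ∃ y : X, ∀ i : ι, ∀ g ∈ Ω i, (g • y, g • x i) ∈ U

/-- The weak specification property for the action of `G` on the uniform space `X`. -/
def WeakSpecification (G X : Type*) [Group G] [SMul G X] [UniformSpace X] : Prop :=
  ∀ U ∈ 𝓤 X, ∃ Λ : Finset G, IsSpecificationSubset G X U Λ

theorem exists_symm_entourage_separating_points {X : Type*} [UniformSpace X] [T0Space X]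
    {a b : X} (hab : a ≠ b) :
    ∃ V ∈ 𝓤 X, SetRel.IsSymm V ∧ ∀ u w, (u, a) ∈ V → (w, b) ∈ V → (u, w) ∉ V := by
  obtain ⟨W, hW, habW⟩ := t0Space_iff_uniformity'.1 ‹_› hab
  obtain ⟨V, hV, hVsymm, hVW⟩ := comp_comp_symm_mem_uniformity_sets hW
  exact ⟨V, hV, hVsymm, fun u w hu hw huw => habW (hVW ⟨w, ⟨u, SetRel.symm V hu, huw⟩, hw⟩)⟩

theorem exists_card_le_of_pairwise_notMem {X : Type*} [UniformSpace X] [CompactSpace X]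
    {W : Set (X × X)} (hW : W ∈ 𝓤 X) :
    ∃ N : ℕ, ∀ Z : Finset X, (Z : Set X).Pairwise (fun x y => (x, y) ∉ W) → Z.card ≤ N := by
  obtain ⟨E, hE, hEsymm, hEW⟩ := comp_symm_mem_uniformity_sets hW
  obtain ⟨t, ht⟩ := isCompact_univ.elim_nhds_subcover (fun x => UniformSpace.ball x E)
    (fun x _ => UniformSpace.ball_mem_nhds x hE)
  have hcenter : ∀ z : X, ∃ c ∈ t, (c, z) ∈ E := by
    simpa [UniformSpace.ball] using fun z => ht.2 (Set.mem_univ z)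
  choose c hct hcz using hcenter
  refine ⟨t.card, fun Z hZ => Finset.card_le_card_of_injOn c (fun z _ => hct z) ?_⟩
  intro z hz z' hz' hcc
  by_contra hne
  exact hZ hz hz' hne (hEW ⟨c z, SetRel.symm E (hcz z), hcc ▸ hcz z'⟩)

theorem dynEnt_mem_uniformity {G X : Type*} [SMul G X] [UniformSpace X]
    (hunif : ∀ g : G, UniformContinuous fun x : X => g • x) {V : Set (X × X)} (hV : V ∈ 𝓤 X)
    {F : Set G} (hF : F.Finite) : dynEnt V F ∈ 𝓤 X := by
  have hdyn : dynEnt V F = ⋂ g ∈ F, (fun p : X × X => (g • p.1, g • p.2)) ⁻¹' V := by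
    ext; simp [dynEnt]
  rw [hdyn, Filter.biInter_mem hF]
  exact fun g _ => hunif g hV

theorem card_le_sepCard {G X : Type*} [SMul G X] [UniformSpace X] [CompactSpace X]
    {U : Set (X × X)} {F : Set G} (hU : dynEnt U F ∈ 𝓤 X) {Z : Finset X}
    (hZ : (Z : Set X).Pairwise fun x y => (x, y) ∉ dynEnt U F) : Z.card ≤ sepCard U F := by
  obtain ⟨N, hN⟩ := exists_card_le_of_pairwise_notMem hU
  exact le_csSup ⟨N, fun _ ⟨Z', hZ'card, hZ'⟩ => hZ'card ▸ hN Z' hZ'⟩ ⟨Z, rfl, hZ⟩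

theorem Finset.exists_subset_pairwise_and_subset_mul {G : Type*} [Group G] [DecidableEq G]
    (F Λ : Finset G) (h1 : 1 ∈ Λ) (hinv : Λ⁻¹ = Λ) :
    ∃ S ⊆ F, (S : Set G).Pairwise (fun s t => s * t⁻¹ ∉ Λ) ∧ F ⊆ Λ * S := by
  induction F using Finset.induction_on with
  | empty => exact ⟨∅, subset_refl _, by simp, empty_subset _⟩
  | insert f F _ ih =>
    obtain ⟨S, hSF, hSsep, hFS⟩ := ih
    by_cases hcov : ∃ s ∈ S, f * s⁻¹ ∈ Λ
    · obtain ⟨s, hs, hfs⟩ := hcov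
      refine ⟨S, hSF.trans (subset_insert _ _), hSsep, insert_subset ?_ hFS⟩
      exact mem_mul.2 ⟨f * s⁻¹, hfs, s, hs, inv_mul_cancel_right f s⟩
    · push Not at hcov
      refine ⟨insert f S, insert_subset_insert f hSF, ?_, ?_⟩
      · rw [coe_insert]
        refine hSsep.insert fun t ht _ => ⟨hcov t ht, fun htf => hcov t ht ?_⟩
        simpa [hinv] using inv_mem_inv htf
      · exact insert_subset (mem_mul.2 ⟨1, h1, f, mem_insert_self f S, one_mul f⟩)
          (hFS.trans (mul_subset_mul_left (subset_insert f S)))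

theorem Finset.inv_insert_one_union_inv {G : Type*} [Group G] [DecidableEq G] (s : Finset G) :
    (insert 1 (s ∪ s⁻¹))⁻¹ = insert 1 (s ∪ s⁻¹) := by
  ext g
  simp [or_comm]

theorem IsSpecificationSubset.mono {G X : Type*} [Group G] [SMul G X] {U : Set (X × X)}
    {Λ₀ Λ : Finset G} (hΛ₀ : IsSpecificationSubset G X U Λ₀) (hsub : Λ₀ ⊆ Λ) :
    IsSpecificationSubset G X U Λ := fun ι hι hne Ω x hdisj =>
  hΛ₀ ι hι hne Ω x fun j k hjk =>
    (hdisj j k hjk).mono_right (Set.mul_subset_mul_right (Finset.coe_subset.2 hsub))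

theorem IsSpecificationSubset.exists_smul_mem {G X : Type*} [Group G] [MulAction G X]
    {U : Set (X × X)} {Λ : Finset G} (hΛ : IsSpecificationSubset G X U Λ) {S : Finset G}
    (hS : S.Nonempty) (hsep : (S : Set G).Pairwise fun s t => s * t⁻¹ ∉ Λ) (x : G → X) :
    ∃ y : X, ∀ s ∈ S, (s • y, x s) ∈ U := by
  -- Specification quantifies over index types in `Type`, so `S` is indexed by `Fin S.card`.
  let e : Fin S.card ≃ S := S.equivFin.symm
  have hdisj : ∀ j k, j ≠ k →
      Disjoint (({(e j : G)} : Finset G) : Set G) ((Λ : Set G) * (({(e k : G)} : Finset G))) := by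
    intro j k hjk
    simp only [Finset.coe_singleton, Set.mul_singleton, Set.disjoint_singleton_left,
      Set.image_mul_right, Set.mem_preimage, Finset.mem_coe]
    exact hsep (e j).2 (e k).2 fun h => hjk (e.injective (Subtype.ext h))
  obtain ⟨y, hy⟩ := hΛ (Fin S.card) inferInstance ⟨⟨0, hS.card_pos⟩⟩
    (fun i => {(e i : G)}) (fun i => (e i : G)⁻¹ • x (e i)) hdisj
  refine ⟨y, fun s hs => ?_⟩
  simpa [smul_smul] using hy (e.symm ⟨s, hs⟩) s (by simp)

theorem exists_card_eq_two_pow_pairwise_notMem_dynEnt {G X : Type*} [Group G] [MulAction G X]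
    {V : Set (X × X)} [SetRel.IsRefl V] [SetRel.IsSymm V] {a b : X}
    (hab : ∀ u w, (u, a) ∈ V → (w, b) ∈ V → (u, w) ∉ V) {Λ : Finset G}
    (hΛ : IsSpecificationSubset G X V Λ) {S F : Finset G} (hS : S.Nonempty) (hSF : S ⊆ F)
    (hsep : (S : Set G).Pairwise fun s t => s * t⁻¹ ∉ Λ) :
    ∃ Z : Finset X, (Z : Set X).Pairwise (fun x y => (x, y) ∉ dynEnt V (F : Set G)) ∧
      Z.card = 2 ^ S.card := by
  classical
  choose φ hφ using fun T : Finset G => hΛ.exists_smul_mem hS hsep fun s => if s ∈ T then a else b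
  have hkey : ∀ T ⊆ S, ∀ T', ∀ s ∈ T, s ∉ T' → (φ T, φ T') ∉ dynEnt V (F : Set G) := by
    intro T hTS T' s hsT hsT' hmem
    have hφT := hφ T s (hTS hsT)
    have hφT' := hφ T' s (hTS hsT)
    simp only [hsT, hsT', if_true, if_false] at hφT hφT'
    exact hab _ _ hφT hφT' (hmem s (hSF (hTS hsT)))
  have hφsep : (S.powerset : Set (Finset G)).Pairwise fun T T' =>
      (φ T, φ T') ∉ dynEnt V (F : Set G) := by
    intro T hT T' hT' hne hmem
    obtain ⟨s, hs⟩ : ∃ s, ¬(s ∈ T ↔ s ∈ T') := by simpa [Finset.ext_iff] using hne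
    by_cases hsT : s ∈ T
    · exact hkey T (Finset.mem_powerset.1 hT) T' s hsT (by tauto) hmem
    · exact hkey T' (Finset.mem_powerset.1 hT') T s (by tauto) hsT
        fun g hg => SetRel.symm V (hmem g hg)
  have hinj : Set.InjOn φ S.powerset := fun T hT T' hT' hφeq => by
    by_contra hne
    exact hφsep hT hT' hne (hφeq ▸ fun g _ => SetRel.rfl V)
  refine ⟨S.powerset.image φ, ?_, ?_⟩
  · rwa [Finset.coe_image, hinj.pairwise_image]
  · rw [Finset.card_image_of_injOn hinj, Finset.card_powerset]

theorem rpow_div_le_pow_of_le_mul {b : ℝ} (hb : 1 ≤ b) {m k n : ℕ} (hk : 0 < k)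
    (h : m ≤ k * n) : b ^ ((m : ℝ) / k) ≤ b ^ n := by
  have hexp : (m : ℝ) / k ≤ n := by
    rw [div_le_iff₀ (by exact_mod_cast hk), mul_comm]
    exact_mod_cast h
  simpa using Real.rpow_le_rpow_of_exponent_le hb hexp

/-- For a continuous action with weak specification of a group `G` on a compact Hausdorff
space `X` with more than one point, there are an entourage `U` and a nonempty symmetric
finite subset `Λ ⊆ G` such that for every nonempty finite `F ⊆ G` there is an
`(F,U)`-separated subset of cardinality at least `2^(|F|/|Λ|)`; in particular
`sep(X,G,F,U) ≥ 2^(|F|/|Λ|)`. -/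
theorem separated_sets_exponential_growth {G X : Type*} [Group G]
    [UniformSpace X] [CompactSpace X] [T2Space X] [MulAction G X]
    (hcont : ∀ g : G, Continuous fun x : X => g • x)
    (hbig : ∃ x y : X, x ≠ y)
    (hwsp : WeakSpecification G X) :
    ∃ U ∈ 𝓤 X, ∃ Λ : Finset G, Λ.Nonempty ∧ (Λ : Set G)⁻¹ = (Λ : Set G) ∧
      ∀ F : Finset G, F.Nonempty →
        (∃ Z : Finset X,
          (∀ x ∈ Z, ∀ y ∈ Z, x ≠ y → (x, y) ∉ dynEnt (G := G) U (F : Set G)) ∧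
          (2 : ℝ) ^ ((F.card : ℝ) / (Λ.card : ℝ)) ≤ (Z.card : ℝ)) ∧
        (2 : ℝ) ^ ((F.card : ℝ) / (Λ.card : ℝ)) ≤ (sepCard (G := G) U (F : Set G) : ℝ) := by
  classical
  obtain ⟨a, b, hab⟩ := hbig
  obtain ⟨V, hV, hVsymm, hVab⟩ := exists_symm_entourage_separating_points hab
  have := isRefl_of_mem_uniformity hV
  obtain ⟨Λ₀, hΛ₀⟩ := hwsp V hV
  set Λ := insert 1 (Λ₀ ∪ Λ₀⁻¹)
  have hΛ : IsSpecificationSubset G X V Λ :=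
    hΛ₀.mono (Finset.subset_union_left.trans (Finset.subset_insert _ _))
  have hΛinv : Λ⁻¹ = Λ := Finset.inv_insert_one_union_inv Λ₀
  refine ⟨V, hV, Λ, Finset.insert_nonempty _ _, by rw [← Finset.coe_inv, hΛinv], fun F hF => ?_⟩
  obtain ⟨S, hSF, hSsep, hFS⟩ :=
    F.exists_subset_pairwise_and_subset_mul Λ (Finset.mem_insert_self _ _) hΛinv
  obtain ⟨Z, hZsep, hZcard⟩ := exists_card_eq_two_pow_pairwise_notMem_dynEnt hVab hΛ
    (hF.mono hFS).of_mul_right hSF hSsep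
  have hZbig : (2 : ℝ) ^ ((F.card : ℝ) / Λ.card) ≤ Z.card := by
    simpa [hZcard] using rpow_div_le_pow_of_le_mul one_le_two (Finset.insert_nonempty _ _).card_pos
      ((Finset.card_le_card hFS).trans Finset.card_mul_le)
  have hU : dynEnt V (F : Set G) ∈ 𝓤 X :=
    dynEnt_mem_uniformity (fun g => CompactSpace.uniformContinuous_of_continuous (hcont g)) hV
      F.finite_toSet
  exact ⟨⟨Z, hZsep, hZbig⟩, hZbig.trans (by exact_mod_cast card_le_sepCard hU hZsep)⟩
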